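/- arXiv:1305.6471 — 4 statements merged into one kernel-verified Lean document; each statement's English description precedes it below -/
import Mathlib

section
/- Let G be a Lie group acting smoothly on the right of a manifold P via δ : P × G → P, and let s, σ : U → P be smooth local sections of a submersion π : P → B over an open set U ⊆ B satisfying π ∘ s = π ∘ σ = id_U. Suppose σ = s·g for a smooth map g : U → G, i.e. σ(x) = δ(s(x), g(x)). Then for every x ∈ U and v ∈ T_x B: T_x σ(v) = T_{s(x)}R_{g(x)}(T_x s(v)) + (A)*_{σ(x)}, where A = (g⁻¹dg)_x(v) ∈ 𝔤, R_a = δ(·, a) is the right translation of P by a, and A*_p = T_e δ_p(A) is the value at p of the fundamental vector field of A. -/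
open scoped Manifold
noncomputable section

/-! Basic vocabulary: left/right logarithmic differentials, adjoint representation,
fundamental vector fields of a right action. All tangent spaces of a manifold modelled
on a normed space `E` (boundaryless, with model `ModelWithCorners ℝ E E`) are `E`. -/

variable {EG : Type*} [NormedAddCommGroup EG] [NormedSpace ℝ EG]
  {G : Type*} [TopologicalSpace G] [ChartedSpace EG G] [Group G]
  {EM : Type*} [NormedAddCommGroup EM] [NormedSpace ℝ EM]
  {M : Type*} [TopologicalSpace M] [ChartedSpace EM M]

/-- Left logarithmic (Maurer-Cartan) differential:
`(f⁻¹df)ₓ(v) = T_{f x} λ_{(f x)⁻¹} (T_x f (v))`. -/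
def leftLog (IM : ModelWithCorners ℝ EM EM) (IG : ModelWithCorners ℝ EG EG)
    (f : M → G) (x : M) (v : TangentSpace IM x) : EG :=
  mfderiv IG IG (fun g => (f x)⁻¹ * g) (f x) (mfderiv IM IG f x v)

/-- Right logarithmic differential:
`(df.f⁻¹)ₓ(v) = T_{f x} ρ_{(f x)⁻¹} (T_x f (v))`. -/
def rightLog (IM : ModelWithCorners ℝ EM EM) (IG : ModelWithCorners ℝ EG EG)
    (f : M → G) (x : M) (v : TangentSpace IM x) : EG :=
  mfderiv IG IG (fun g => g * (f x)⁻¹) (f x) (mfderiv IM IG f x v)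

/-- Adjoint representation `Ad(a) = T_e (g ↦ a g a⁻¹)`. -/
def adjRep (IG : ModelWithCorners ℝ EG EG) (a : G) (X : EG) : EG :=
  mfderiv IG IG (fun g => a * g * a⁻¹) (1 : G) X

variable {EB : Type*} [NormedAddCommGroup EB] [NormedSpace ℝ EB]
  {B : Type*} [TopologicalSpace B] [ChartedSpace EB B]
  {EP : Type*} [NormedAddCommGroup EP] [NormedSpace ℝ EP]
  {P : Type*} [TopologicalSpace P] [ChartedSpace EP P]

/-- The value at `p` of the fundamental (Killing) vector field of `A ∈ 𝔤` for the
right action `δ`: `A*_p = T_e δ_p (A)`. -/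
def fundVF (IG : ModelWithCorners ℝ EG EG) (IP : ModelWithCorners ℝ EP EP)
    (δ : P → G → P) (A : EG) (p : P) : EP :=
  mfderiv IG IP (δ p) (1 : G) A

/-- The differential `T_x f` applied to a tangent vector, with all tangent spaces
identified with the model vector spaces. -/
def tDiff {E₁ : Type*} [NormedAddCommGroup E₁] [NormedSpace ℝ E₁]
    {M₁ : Type*} [TopologicalSpace M₁] [ChartedSpace E₁ M₁]
    {E₂ : Type*} [NormedAddCommGroup E₂] [NormedSpace ℝ E₂]
    {M₂ : Type*} [TopologicalSpace M₂] [ChartedSpace E₂ M₂]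
    (I₁ : ModelWithCorners ℝ E₁ E₁) (I₂ : ModelWithCorners ℝ E₂ E₂)
    (f : M₁ → M₂) (x : M₁) (u : E₁) : E₂ :=
  mfderiv I₁ I₂ f x u

/-! Near `x` we have `σ = δ ∘ (s, g)`, so `T_x σ` is the sum of the partial derivatives of `δ`
along `P` and along `G`. The one along `G` becomes a fundamental vector field through the
factorisation `δ_{s x} = δ_{σ x} ∘ λ_{(g x)⁻¹}`, which is the action law. -/

section ChainRule

variable {𝕜 : Type*} [NontriviallyNormedField 𝕜]
  {E : Type*} [NormedAddCommGroup E] [NormedSpace 𝕜 E] {H : Type*} [TopologicalSpace H]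
  {I : ModelWithCorners 𝕜 E H} {M : Type*} [TopologicalSpace M] [ChartedSpace H M]
  {E' : Type*} [NormedAddCommGroup E'] [NormedSpace 𝕜 E'] {H' : Type*} [TopologicalSpace H']
  {I' : ModelWithCorners 𝕜 E' H'} {M' : Type*} [TopologicalSpace M'] [ChartedSpace H' M']
  {F : Type*} [NormedAddCommGroup F] [NormedSpace 𝕜 F] {HF : Type*} [TopologicalSpace HF]
  {J : ModelWithCorners 𝕜 F HF} {N : Type*} [TopologicalSpace N] [ChartedSpace HF N]
  {EX : Type*} [NormedAddCommGroup EX] [NormedSpace 𝕜 EX] {HX : Type*} [TopologicalSpace HX]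
  {IX : ModelWithCorners 𝕜 EX HX} {X : Type*} [TopologicalSpace X] [ChartedSpace HX X]

theorem MDifferentiableAt.mfderiv_comp_prodMk_apply {Φ : M → M' → N} {f : X → M} {h : X → M'}
    {x : X} (hΦ : MDifferentiableAt (I.prod I') J (fun q : M × M' => Φ q.1 q.2) (f x, h x))
    (hf : MDifferentiableAt IX I f x) (hh : MDifferentiableAt IX I' h x) (v : TangentSpace IX x) :
    mfderiv IX J (fun y => Φ (f y) (h y)) x v =
      mfderiv I J (fun z => Φ z (h x)) (f x) (mfderiv IX I f x v) +
        mfderiv I' J (Φ (f x)) (h x) (mfderiv IX I' h x v) := by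
  have hchain := mfderiv_comp_apply x hΦ (hf.prodMk hh) v
  rw [hf.mfderiv_prod hh] at hchain
  exact hchain.trans (mfderiv_prod_eq_add_apply hΦ)

end ChainRule

theorem mfderiv_orbit_eq_fundVF [ContMDiffMul IG 1 G] (IP : ModelWithCorners ℝ EP EP)
    {δ : P → G → P} (hδmul : ∀ (p : P) (a b : G), δ (δ p a) b = δ p (a * b)) {p : P} {a : G}
    (hδ : MDifferentiableAt IG IP (δ (δ p a)) 1) (w : EG) :
    mfderiv IG IP (δ p) a w = fundVF IG IP δ (mfderiv IG IG (fun b => a⁻¹ * b) a w) (δ p a) := by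
  have hfactor : δ p = δ (δ p a) ∘ (fun b => a⁻¹ * b) := by
    funext b
    simp only [Function.comp_apply, hδmul, mul_inv_cancel_left]
  conv_lhs => rw [hfactor]
  exact mfderiv_comp_apply_of_eq a hδ mdifferentiableAt_mul_left (inv_mul_cancel a) w

theorem tangent_of_section_mul_general
    (IG : ModelWithCorners ℝ EG EG) (IB : ModelWithCorners ℝ EB EB)
    (IP : ModelWithCorners ℝ EP EP)
    [LieGroup IG (⊤ : ℕ∞) G]
    (δ : P → G → P)
    (hδ : ContMDiff (IP.prod IG) IP (⊤ : ℕ∞) (fun q : P × G => δ q.1 q.2))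
    (hδmul : ∀ (p : P) (a b : G), δ (δ p a) b = δ p (a * b))
    (U : Set B) (hU : IsOpen U)
    (s σ : B → P) (g : B → G)
    (hs : ContMDiffOn IB IP (⊤ : ℕ∞) s U)
    (hg : ContMDiffOn IB IG (⊤ : ℕ∞) g U)
    (hσs : ∀ x ∈ U, σ x = δ (s x) (g x)) :
    ∀ x ∈ U, ∀ v : TangentSpace IB x,
      tDiff IB IP σ x v =
        tDiff IP IP (fun q => δ q (g x)) (s x) (tDiff IB IP s x v) +
          fundVF IG IP δ (leftLog IB IG g x v) (σ x) := by
  intro x hx v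
  have hxU : U ∈ nhds x := hU.mem_nhds hx
  have hδd : MDifferentiable (IP.prod IG) IP (fun q : P × G => δ q.1 q.2) :=
    hδ.mdifferentiable (by simp)
  have hδorbit : ∀ q : P, MDifferentiableAt IG IP (δ q) 1 := fun q =>
    (hδd _).comp (1 : G) (mdifferentiableAt_const.prodMk mdifferentiableAt_id)
  have hσ_eq : σ =ᶠ[nhds x] fun y => δ (s y) (g y) := Filter.eventually_of_mem hxU hσs
  have hsx := (hs.mdifferentiableOn (by simp)).mdifferentiableAt hxU
  have hgx := (hg.mdifferentiableOn (by simp)).mdifferentiableAt hxU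
  calc tDiff IB IP σ x v = tDiff IB IP (fun y => δ (s y) (g y)) x v := by
        show mfderiv IB IP σ x v = mfderiv IB IP (fun y => δ (s y) (g y)) x v
        rw [hσ_eq.mfderiv_eq]
        rfl
    _ = tDiff IP IP (fun q => δ q (g x)) (s x) (tDiff IB IP s x v) +
          tDiff IG IP (δ (s x)) (g x) (tDiff IB IG g x v) :=
        (hδd _).mfderiv_comp_prodMk_apply hsx hgx v
    _ = _ := by
        rw [hσs x hx]
        exact congrArg _ (mfderiv_orbit_eq_fundVF IP hδmul (hδorbit _) _)

/-- If `σ = s·g` for local sections `s, σ` of a submersion `π : P → B` carrying a smooth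
right `G`-action `δ` and a smooth map `g : U → G`, then
`T_x σ (v) = T_{s x} R_{g x} (T_x s (v)) + ((g⁻¹dg)ₓ(v))*_{σ x}`. -/
theorem tangent_of_section_mul
    (IG : ModelWithCorners ℝ EG EG) (IB : ModelWithCorners ℝ EB EB)
    (IP : ModelWithCorners ℝ EP EP)
    [LieGroup IG (⊤ : ℕ∞) G] [IsManifold IB (⊤ : ℕ∞) B] [IsManifold IP (⊤ : ℕ∞) P]
    (δ : P → G → P)
    (hδ : ContMDiff (IP.prod IG) IP (⊤ : ℕ∞) (fun q : P × G => δ q.1 q.2))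
    (hδ1 : ∀ p : P, δ p 1 = p)
    (hδmul : ∀ (p : P) (a b : G), δ (δ p a) b = δ p (a * b))
    (π : P → B) (hπ : ContMDiff IP IB (⊤ : ℕ∞) π)
    (hsubm : ∀ p : P, Function.Surjective (mfderiv IP IB π p))
    (U : Set B) (hU : IsOpen U)
    (s σ : B → P) (g : B → G)
    (hs : ContMDiffOn IB IP (⊤ : ℕ∞) s U) (hσ : ContMDiffOn IB IP (⊤ : ℕ∞) σ U)
    (hg : ContMDiffOn IB IG (⊤ : ℕ∞) g U)
    (hsec : ∀ x ∈ U, π (s x) = x) (hσsec : ∀ x ∈ U, π (σ x) = x)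
    (hσs : ∀ x ∈ U, σ x = δ (s x) (g x)) :
    ∀ x ∈ U, ∀ v : TangentSpace IB x,
      tDiff IB IP σ x v =
        tDiff IP IP (fun q => δ q (g x)) (s x) (tDiff IB IP s x v) +
          fundVF IG IP δ (leftLog IB IG g x v) (σ x) :=
  tangent_of_section_mul_general IG IB IP δ hδ hδmul U hU s σ g hs hg hσs
end
end

section
/- Let ω be a connection form on a principal G-bundle P → B, and let s, σ : U → P be smooth sections over an open U ⊆ B with σ = s·g for a smooth map g : U → G. Then the pulled-back forms satisfy σ*ω = Ad(g⁻¹).(s*ω) + g⁻¹dg, i.e. (σ*ω)_x(v) = Ad(g(x)⁻¹).((s*ω)_x(v)) + (g⁻¹dg)_x(v) for all x ∈ U, v ∈ T_x B. -/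
open scoped Manifold
noncomputable section

/-! Basic vocabulary: left/right logarithmic differentials, adjoint representation,
fundamental vector fields of a right action. All tangent spaces of a manifold modelled
on a normed space `E` (boundaryless, with model `ModelWithCorners ℝ E E`) are `E`. -/

variable {EG : Type*} [NormedAddCommGroup EG] [NormedSpace ℝ EG]
  {G : Type*} [TopologicalSpace G] [ChartedSpace EG G] [Group G]
  {EM : Type*} [NormedAddCommGroup EM] [NormedSpace ℝ EM]
  {M : Type*} [TopologicalSpace M] [ChartedSpace EM M]

variable {EB : Type*} [NormedAddCommGroup EB] [NormedSpace ℝ EB]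
  {B : Type*} [TopologicalSpace B] [ChartedSpace EB B]
  {EP : Type*} [NormedAddCommGroup EP] [NormedSpace ℝ EP]
  {P : Type*} [TopologicalSpace P] [ChartedSpace EP P]

/-! Differentiating `σ = s·g` splits `dσ` into the image of `ds` under the right translation
`R_g`, which `ω` sends to `Ad(g⁻¹)(s*ω)` by equivariance, and the derivative of the orbit map
`a ↦ s·a` along `dg`. Since `s·a = σ·(g⁻¹a)`, the latter is the fundamental vector field of
`g⁻¹dg` at `σ`, which `ω` sends to `g⁻¹dg`. -/

section

variable {𝕜 : Type*} [NontriviallyNormedField 𝕜]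
  {E : Type*} [NormedAddCommGroup E] [NormedSpace 𝕜 E] {H : Type*} [TopologicalSpace H]
  {I : ModelWithCorners 𝕜 E H} {M : Type*} [TopologicalSpace M] [ChartedSpace H M]
  {E' : Type*} [NormedAddCommGroup E'] [NormedSpace 𝕜 E'] {H' : Type*} [TopologicalSpace H']
  {I' : ModelWithCorners 𝕜 E' H'} {M' : Type*} [TopologicalSpace M'] [ChartedSpace H' M']
  {E'' : Type*} [NormedAddCommGroup E''] [NormedSpace 𝕜 E''] {H'' : Type*} [TopologicalSpace H'']
  {I'' : ModelWithCorners 𝕜 E'' H''} {M'' : Type*} [TopologicalSpace M''] [ChartedSpace H'' M'']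
  {F : Type*} [NormedAddCommGroup F] [NormedSpace 𝕜 F] {HN : Type*} [TopologicalSpace HN]
  {J : ModelWithCorners 𝕜 F HN} {N : Type*} [TopologicalSpace N] [ChartedSpace HN N]

theorem mfderiv_comp₂_apply_eq_add {f : M' → M'' → N} {s : M → M'} {g : M → M''} {x : M}
    (hf : MDifferentiableAt (I'.prod I'') J (Function.uncurry f) (s x, g x))
    (hs : MDifferentiableAt I I' s x) (hg : MDifferentiableAt I I'' g x) (v : TangentSpace I x) :
    mfderiv I J (fun y => f (s y) (g y)) x v =
      mfderiv I' J (fun p => f p (g x)) (s x) (mfderiv I I' s x v) +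
        mfderiv I'' J (f (s x)) (g x) (mfderiv I I'' g x v) := by
  have h := mfderiv_comp_apply x hf (hs.prodMk hg) v
  rw [hs.mfderiv_prod hg] at h
  exact h.trans (mfderiv_prod_eq_add_apply hf)

end

theorem mfderiv_orbitMap_eq_fundVF {IG : ModelWithCorners ℝ EG EG} {IP : ModelWithCorners ℝ EP EP} [ContMDiffMul IG 1 G]
    {δ : P → G → P} (hδ : MDifferentiable (IP.prod IG) IP (fun q : P × G => δ q.1 q.2))
    (hδmul : ∀ (p : P) (a b : G), δ (δ p a) b = δ p (a * b)) (p : P) (a : G) (w : EG) :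
    mfderiv IG IP (δ p) a w = fundVF IG IP δ (mfderiv IG IG (a⁻¹ * ·) a w) (δ p a) := by
  have hδ_orbit : δ p = δ (δ p a) ∘ (a⁻¹ * ·) := by
    funext b
    simp [hδmul]
  have hδ_at_one : MDifferentiableAt IG IP (δ (δ p a)) 1 :=
    (hδ _).comp _ (mdifferentiableAt_const.prodMk mdifferentiableAt_id)
  have h := mfderiv_comp_apply_of_eq a hδ_at_one mdifferentiableAt_mul_left (inv_mul_cancel a) w
  rwa [← hδ_orbit] at h

theorem pullback_connection_form_section_mul_general
    (IG : ModelWithCorners ℝ EG EG) (IB : ModelWithCorners ℝ EB EB)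
    (IP : ModelWithCorners ℝ EP EP)
    [LieGroup IG (⊤ : ℕ∞) G]
    (δ : P → G → P)
    (hδ : ContMDiff (IP.prod IG) IP (⊤ : ℕ∞) (fun q : P × G => δ q.1 q.2))
    (hδmul : ∀ (p : P) (a b : G), δ (δ p a) b = δ p (a * b))
    -- the connection form ω ∈ Λ¹(P, 𝔤): ω(X*) = X and R_a*ω = Ad(a⁻¹).ω
    (ω : P → (EP →L[ℝ] EG))
    (hω1 : ∀ (p : P) (X : EG), ω p (fundVF IG IP δ X p) = X)
    (hω2 : ∀ (a : G) (p : P) (u : EP),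
      ω (δ p a) (tDiff IP IP (fun q => δ q a) p u) = adjRep IG a⁻¹ (ω p u))
    -- local sections with σ = s·g
    (U : Set B) (hU : IsOpen U)
    (s σ : B → P) (g : B → G)
    (hs : ContMDiffOn IB IP (⊤ : ℕ∞) s U)
    (hg : ContMDiffOn IB IG (⊤ : ℕ∞) g U)
    (hσs : ∀ x ∈ U, σ x = δ (s x) (g x)) :
    ∀ x ∈ U, ∀ v : TangentSpace IB x,
      ω (σ x) (tDiff IB IP σ x v) =
        adjRep IG (g x)⁻¹ (ω (s x) (tDiff IB IP s x v)) + leftLog IB IG g x v := by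
  intro x hx v
  have hsx : MDifferentiableAt IB IP s x :=
    (hs.contMDiffAt (hU.mem_nhds hx)).mdifferentiableAt (by simp)
  have hgx : MDifferentiableAt IB IG g x :=
    (hg.contMDiffAt (hU.mem_nhds hx)).mdifferentiableAt (by simp)
  have hδ_diff : MDifferentiable (IP.prod IG) IP (fun q : P × G => δ q.1 q.2) :=
    hδ.mdifferentiable (by simp)
  have hσ_eq : σ =ᶠ[nhds x] fun y => δ (s y) (g y) :=
    Filter.eventually_of_mem (hU.mem_nhds hx) hσs
  have hdσ : tDiff IB IP σ x v = tDiff IP IP (fun q => δ q (g x)) (s x) (tDiff IB IP s x v) +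
      fundVF IG IP δ (leftLog IB IG g x v) (σ x) := by
    unfold tDiff
    rw [hσ_eq.mfderiv_eq]
    refine (mfderiv_comp₂_apply_eq_add (hδ_diff _) hsx hgx v).trans ?_
    rw [hσs x hx]
    exact congrArg (_ + ·) (mfderiv_orbitMap_eq_fundVF hδ_diff hδmul (s x) (g x) _)
  rw [hdσ, map_add, hω1, hσs x hx, hω2]

/-- For a connection form `ω` on a principal `G`-bundle `P → B` and sections `σ = s·g`
over `U`, the pullbacks satisfy `σ*ω = Ad(g⁻¹).(s*ω) + g⁻¹dg`. -/
theorem pullback_connection_form_section_mul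
    (IG : ModelWithCorners ℝ EG EG) (IB : ModelWithCorners ℝ EB EB)
    (IP : ModelWithCorners ℝ EP EP)
    [LieGroup IG (⊤ : ℕ∞) G] [IsManifold IB (⊤ : ℕ∞) B] [IsManifold IP (⊤ : ℕ∞) P]
    -- the principal bundle structure: a smooth, free right action, fiberwise transitive
    -- over the smooth surjective submersion π
    (δ : P → G → P)
    (hδ : ContMDiff (IP.prod IG) IP (⊤ : ℕ∞) (fun q : P × G => δ q.1 q.2))
    (hδ1 : ∀ p : P, δ p 1 = p)
    (hδmul : ∀ (p : P) (a b : G), δ (δ p a) b = δ p (a * b))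
    (π : P → B) (hπ : ContMDiff IP IB (⊤ : ℕ∞) π) (hπsurj : Function.Surjective π)
    (hsubm : ∀ p : P, Function.Surjective (mfderiv IP IB π p))
    (hπδ : ∀ (p : P) (a : G), π (δ p a) = π p)
    (hfree : ∀ (p : P) (a : G), δ p a = p → a = 1)
    (htrans : ∀ p q : P, π p = π q → ∃ a : G, q = δ p a)
    -- the connection form ω ∈ Λ¹(P, 𝔤): ω(X*) = X and R_a*ω = Ad(a⁻¹).ω
    (ω : P → (EP →L[ℝ] EG))
    (hω1 : ∀ (p : P) (X : EG), ω p (fundVF IG IP δ X p) = X)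
    (hω2 : ∀ (a : G) (p : P) (u : EP),
      ω (δ p a) (tDiff IP IP (fun q => δ q a) p u) = adjRep IG a⁻¹ (ω p u))
    -- local sections with σ = s·g
    (U : Set B) (hU : IsOpen U)
    (s σ : B → P) (g : B → G)
    (hs : ContMDiffOn IB IP (⊤ : ℕ∞) s U) (hσ : ContMDiffOn IB IP (⊤ : ℕ∞) σ U)
    (hg : ContMDiffOn IB IG (⊤ : ℕ∞) g U)
    (hsec : ∀ x ∈ U, π (s x) = x) (hσsec : ∀ x ∈ U, π (σ x) = x)
    (hσs : ∀ x ∈ U, σ x = δ (s x) (g x)) :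
    ∀ x ∈ U, ∀ v : TangentSpace IB x,
      ω (σ x) (tDiff IB IP σ x v) =
        adjRep IG (g x)⁻¹ (ω (s x) (tDiff IB IP s x v)) + leftLog IB IG g x v :=
  pullback_connection_form_section_mul_general IG IB IP δ hδ hδmul ω hω1 hω2 U hU s σ g hs hg hσs
end
end

section
/- Let (f, φ, id_B) : (P, G, B, π) → (Q, H, B, π′) be a principal bundle morphism, ω and θ connection forms on P and Q respectively, and {ω_α}, {θ_α} their local connection forms with respect to trivializations over a common open cover {U_α}, with h_α : U_α → H defined by f ∘ s_α = t_α·h_α. If ω and θ are (f, φ, id_B)-related, i.e. f*θ = φ̄ω, then φ̄ω_α = Ad(h_α⁻¹).θ_α + h_α⁻¹dh_α on U_α for every α. -/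
open scoped Manifold
noncomputable section

/-! Basic vocabulary: left/right logarithmic differentials, adjoint representation,
fundamental vector fields of a right action. All tangent spaces of a manifold modelled
on a normed space `E` (boundaryless, with model `ModelWithCorners ℝ E E`) are `E`. -/

variable {EG : Type*} [NormedAddCommGroup EG] [NormedSpace ℝ EG]
  {G : Type*} [TopologicalSpace G] [ChartedSpace EG G] [Group G]
  {EM : Type*} [NormedAddCommGroup EM] [NormedSpace ℝ EM]
  {M : Type*} [TopologicalSpace M] [ChartedSpace EM M]

variable {EB : Type*} [NormedAddCommGroup EB] [NormedSpace ℝ EB]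
  {B : Type*} [TopologicalSpace B] [ChartedSpace EB B]
  {EP : Type*} [NormedAddCommGroup EP] [NormedSpace ℝ EP]
  {P : Type*} [TopologicalSpace P] [ChartedSpace EP P]

variable {EH : Type*} [NormedAddCommGroup EH] [NormedSpace ℝ EH]
  {H : Type*} [TopologicalSpace H] [ChartedSpace EH H] [Group H]
  {EQ : Type*} [NormedAddCommGroup EQ] [NormedSpace ℝ EQ]
  {Q : Type*} [TopologicalSpace Q] [ChartedSpace EQ Q]

/-- The induced Lie algebra morphism `φ̄ = T_e φ` of a Lie group morphism `φ : G → H`. -/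
def lieMorphDiff (IG : ModelWithCorners ℝ EG EG) (IH : ModelWithCorners ℝ EH EH)
    (φ : G → H) (X : EG) : EH :=
  mfderiv IG IH φ (1 : G) X

/-! Differentiating `f ∘ s_α = t_α · h_α` by the Leibniz rule for the action splits the
derivative into the right translate of `dt_α` by `h_α` and the fundamental vector field of
`h_α⁻¹dh_α` at `t_α h_α`. Equivariance of `θ` turns the first term into `Ad(h_α⁻¹)θ_α`, the
normalisation of `θ` on fundamental fields turns the second into `h_α⁻¹dh_α`, and relatedness
identifies `θ` of the left-hand side with `φ̄ω_α`. -/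

theorem mfderiv_apply₂_eq_add
    {E₁ : Type*} [NormedAddCommGroup E₁] [NormedSpace ℝ E₁]
    {M₁ : Type*} [TopologicalSpace M₁] [ChartedSpace E₁ M₁]
    {E₂ : Type*} [NormedAddCommGroup E₂] [NormedSpace ℝ E₂]
    {M₂ : Type*} [TopologicalSpace M₂] [ChartedSpace E₂ M₂]
    {E₃ : Type*} [NormedAddCommGroup E₃] [NormedSpace ℝ E₃]
    {M₃ : Type*} [TopologicalSpace M₃] [ChartedSpace E₃ M₃]
    {E₄ : Type*} [NormedAddCommGroup E₄] [NormedSpace ℝ E₄]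
    {M₄ : Type*} [TopologicalSpace M₄] [ChartedSpace E₄ M₄]
    {I₁ : ModelWithCorners ℝ E₁ E₁} {I₂ : ModelWithCorners ℝ E₂ E₂}
    {I₃ : ModelWithCorners ℝ E₃ E₃} {I₄ : ModelWithCorners ℝ E₄ E₄}
    {D : M₂ → M₃ → M₄} {F : M₁ → M₂} {K : M₁ → M₃} {x : M₁}
    (hD : MDifferentiableAt (I₂.prod I₃) I₄ (fun z : M₂ × M₃ => D z.1 z.2) (F x, K x))
    (hF : MDifferentiableAt I₁ I₂ F x) (hK : MDifferentiableAt I₁ I₃ K x)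
    (v : TangentSpace I₁ x) :
    mfderiv I₁ I₄ (fun y => D (F y) (K y)) x v =
      mfderiv I₂ I₄ (fun z => D z (K x)) (F x) (mfderiv I₁ I₂ F x v) +
        mfderiv I₃ I₄ (D (F x)) (K x) (mfderiv I₁ I₃ K x v) := by
  have hpair : mfderiv I₁ (I₂.prod I₃) (fun y => (F y, K y)) x v =
      (mfderiv I₁ I₂ F x v, mfderiv I₁ I₃ K x v) := by
    rw [hF.mfderiv_prod hK]; rfl
  have hchain := mfderiv_comp_apply (g := fun z : M₂ × M₃ => D z.1 z.2) (x := x) hD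
    (hF.prodMk hK) v
  rw [hpair] at hchain
  exact hchain.trans (mfderiv_prod_eq_add_apply hD)

section RightAction

variable {IH : ModelWithCorners ℝ EH EH} {IQ : ModelWithCorners ℝ EQ EQ} [ContMDiffMul IH 1 H]
  {δ : Q → H → Q}

theorem mfderiv_orbit_apply_eq_fundVF
    (hδ : MDifferentiable (IQ.prod IH) IQ (fun z : Q × H => δ z.1 z.2))
    (hδmul : ∀ (q : Q) (a b : H), δ (δ q a) b = δ q (a * b))
    (q : Q) (a : H) (w : TangentSpace IH a) :
    mfderiv IH IQ (δ q) a w =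
      fundVF IH IQ δ (mfderiv IH IH (fun g => a⁻¹ * g) a w) (δ q a) := by
  have horbit : δ q = δ (δ q a) ∘ fun g => a⁻¹ * g := by
    funext g
    simp only [Function.comp_apply, hδmul, mul_inv_cancel_left]
  have hδq : MDifferentiableAt IH IQ (δ (δ q a)) 1 :=
    hδ.comp (mdifferentiable_const.prodMk mdifferentiable_id) 1
  have hchain := mfderiv_comp_apply_of_eq a hδq mdifferentiableAt_mul_left (inv_mul_cancel a) w
  rwa [← horbit] at hchain

theorem connectionForm_mfderiv_act_apply
    {IM : ModelWithCorners ℝ EM EM} (θ : Q → (EQ →L[ℝ] EH))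
    (hθ1 : ∀ (q : Q) (X : EH), θ q (fundVF IH IQ δ X q) = X)
    (hθ2 : ∀ (a : H) (q : Q) (u : EQ),
      θ (δ q a) (tDiff IQ IQ (fun r => δ r a) q u) = adjRep IH a⁻¹ (θ q u))
    (hδ : MDifferentiable (IQ.prod IH) IQ (fun z : Q × H => δ z.1 z.2))
    (hδmul : ∀ (q : Q) (a b : H), δ (δ q a) b = δ q (a * b))
    {t : M → Q} {h : M → H} {x : M}
    (ht : MDifferentiableAt IM IQ t x) (hh : MDifferentiableAt IM IH h x)
    (v : TangentSpace IM x) :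
    θ (δ (t x) (h x)) (mfderiv IM IQ (fun y => δ (t y) (h y)) x v) =
      adjRep IH (h x)⁻¹ (θ (t x) (tDiff IM IQ t x v)) + leftLog IM IH h x v := by
  rw [mfderiv_apply₂_eq_add (hδ _) ht hh]
  refine (map_add (θ _) _ _).trans ?_
  rw [mfderiv_orbit_apply_eq_fundVF hδ hδmul]
  exact congrArg₂ (· + ·) (hθ2 (h x) (t x) _) (hθ1 _ _)

end RightAction

theorem related_implies_local_condition_general {ι : Type*}
    (IG : ModelWithCorners ℝ EG EG) (IH : ModelWithCorners ℝ EH EH)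
    (IB : ModelWithCorners ℝ EB EB)
    (IP : ModelWithCorners ℝ EP EP) (IQ : ModelWithCorners ℝ EQ EQ)
    [LieGroup IH (⊤ : ℕ∞) H]
    -- smooth free actions on P and Q, fiberwise transitive over the projections
    (δQ : Q → H → Q)
    (hδQ : ContMDiff (IQ.prod IH) IQ (⊤ : ℕ∞) (fun z : Q × H => δQ z.1 z.2))
    (hδQmul : ∀ (q : Q) (a b : H), δQ (δQ q a) b = δQ q (a * b))
    -- the pb-morphism (f, φ, id_B)
    (f : P → Q) (φ : G → H) (hf : ContMDiff IP IQ (⊤ : ℕ∞) f)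
    -- connection forms ω on P and θ on Q
    (ω : P → (EP →L[ℝ] EG)) (θ : Q → (EQ →L[ℝ] EH))
    (hθ1 : ∀ (q : Q) (X : EH), θ q (fundVF IH IQ δQ X q) = X)
    (hθ2 : ∀ (a : H) (q : Q) (u : EQ),
      θ (δQ q a) (tDiff IQ IQ (fun r => δQ r a) q u) = adjRep IH a⁻¹ (θ q u))
    -- trivializing data over a common open cover of B
    (U : ι → Set B) (hUopen : ∀ α, IsOpen (U α))
    (s : ι → B → P) (hssmooth : ∀ α, ContMDiffOn IB IP (⊤ : ℕ∞) (s α) (U α))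
    (t : ι → B → Q) (htsmooth : ∀ α, ContMDiffOn IB IQ (⊤ : ℕ∞) (t α) (U α))
    (hα : ι → B → H) (hαsmooth : ∀ α, ContMDiffOn IB IH (⊤ : ℕ∞) (hα α) (U α))
    (hαdef : ∀ α, ∀ x ∈ U α, f (s α x) = δQ (t α x) (hα α x))
    -- relatedness: f*θ = φ̄ω
    (hrel : ∀ (p : P) (u : EP),
      θ (f p) (tDiff IP IQ f p u) = lieMorphDiff IG IH φ (ω p u)) :
    ∀ α, ∀ x ∈ U α, ∀ v : TangentSpace IB x,
      lieMorphDiff IG IH φ (ω (s α x) (tDiff IB IP (s α) x v)) =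
        adjRep IH (hα α x)⁻¹ (θ (t α x) (tDiff IB IQ (t α) x v)) +
          leftLog IB IH (hα α) x v := by
  intro α x hx v
  have hxU : U α ∈ nhds x := (hUopen α).mem_nhds hx
  have hs := ((hssmooth α).contMDiffAt hxU).mdifferentiableAt (by simp)
  have ht := ((htsmooth α).contMDiffAt hxU).mdifferentiableAt (by simp)
  have hh := ((hαsmooth α).contMDiffAt hxU).mdifferentiableAt (by simp)
  have hfs : f ∘ s α =ᶠ[nhds x] fun y => δQ (t α y) (hα α y) :=
    Filter.eventuallyEq_of_mem hxU (hαdef α)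
  calc lieMorphDiff IG IH φ (ω (s α x) (tDiff IB IP (s α) x v))
      = θ (f (s α x)) (mfderiv IB IQ (f ∘ s α) x v) := by
        rw [← hrel]
        exact congrArg (θ _)
          (mfderiv_comp_apply (x := x) (hf.mdifferentiableAt (by simp)) hs v).symm
    _ = θ (δQ (t α x) (hα α x)) (mfderiv IB IQ (fun y => δQ (t α y) (hα α y)) x v) := by
        rw [hfs.mfderiv_eq, hαdef α x hx]
        rfl
    _ = _ := connectionForm_mfderiv_act_apply θ hθ1 hθ2 (hδQ.mdifferentiable (by simp)) hδQmul
        ht hh v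

/-- Theorem 4.1, direct part: if `ω` and `θ` are `(f, φ, id_B)`-related, i.e.
`f*θ = φ̄ω`, then `φ̄ω_α = Ad(h_α⁻¹).θ_α + h_α⁻¹dh_α` on each `U_α`. -/
theorem related_implies_local_condition {ι : Type*}
    (IG : ModelWithCorners ℝ EG EG) (IH : ModelWithCorners ℝ EH EH)
    (IB : ModelWithCorners ℝ EB EB)
    (IP : ModelWithCorners ℝ EP EP) (IQ : ModelWithCorners ℝ EQ EQ)
    [LieGroup IG (⊤ : ℕ∞) G] [LieGroup IH (⊤ : ℕ∞) H] [IsManifold IB (⊤ : ℕ∞) B]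
    [IsManifold IP (⊤ : ℕ∞) P] [IsManifold IQ (⊤ : ℕ∞) Q]
    -- smooth free actions on P and Q, fiberwise transitive over the projections
    (δP : P → G → P) (δQ : Q → H → Q)
    (hδP : ContMDiff (IP.prod IG) IP (⊤ : ℕ∞) (fun z : P × G => δP z.1 z.2))
    (hδQ : ContMDiff (IQ.prod IH) IQ (⊤ : ℕ∞) (fun z : Q × H => δQ z.1 z.2))
    (hδP1 : ∀ p : P, δP p 1 = p)
    (hδPmul : ∀ (p : P) (a b : G), δP (δP p a) b = δP p (a * b))
    (hδQ1 : ∀ q : Q, δQ q 1 = q)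
    (hδQmul : ∀ (q : Q) (a b : H), δQ (δQ q a) b = δQ q (a * b))
    (hδPfree : ∀ (p : P) (a : G), δP p a = p → a = 1)
    (hδQfree : ∀ (q : Q) (a : H), δQ q a = q → a = 1)
    (πP : P → B) (πQ : Q → B)
    (hπP : ContMDiff IP IB (⊤ : ℕ∞) πP) (hπQ : ContMDiff IQ IB (⊤ : ℕ∞) πQ)
    (hπPδ : ∀ (p : P) (a : G), πP (δP p a) = πP p)
    (hπQδ : ∀ (q : Q) (a : H), πQ (δQ q a) = πQ q)
    -- the pb-morphism (f, φ, id_B)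
    (f : P → Q) (φ : G → H) (hf : ContMDiff IP IQ (⊤ : ℕ∞) f)
    (hφ : ContMDiff IG IH (⊤ : ℕ∞) φ) (hφmul : ∀ a b : G, φ (a * b) = φ a * φ b)
    (hπf : ∀ p : P, πQ (f p) = πP p)
    (hequiv : ∀ (p : P) (a : G), f (δP p a) = δQ (f p) (φ a))
    -- connection forms ω on P and θ on Q
    (ω : P → (EP →L[ℝ] EG)) (θ : Q → (EQ →L[ℝ] EH))
    (hω1 : ∀ (p : P) (X : EG), ω p (fundVF IG IP δP X p) = X)
    (hω2 : ∀ (a : G) (p : P) (u : EP),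
      ω (δP p a) (tDiff IP IP (fun r => δP r a) p u) = adjRep IG a⁻¹ (ω p u))
    (hθ1 : ∀ (q : Q) (X : EH), θ q (fundVF IH IQ δQ X q) = X)
    (hθ2 : ∀ (a : H) (q : Q) (u : EQ),
      θ (δQ q a) (tDiff IQ IQ (fun r => δQ r a) q u) = adjRep IH a⁻¹ (θ q u))
    -- trivializing data over a common open cover of B
    (U : ι → Set B) (hUopen : ∀ α, IsOpen (U α)) (hUcover : ⋃ α, U α = Set.univ)
    (s : ι → B → P) (hssmooth : ∀ α, ContMDiffOn IB IP (⊤ : ℕ∞) (s α) (U α))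
    (hsecP : ∀ α, ∀ x ∈ U α, πP (s α x) = x)
    (t : ι → B → Q) (htsmooth : ∀ α, ContMDiffOn IB IQ (⊤ : ℕ∞) (t α) (U α))
    (hsecQ : ∀ α, ∀ x ∈ U α, πQ (t α x) = x)
    (γ : ι → P → G)
    (hγ : ∀ α, ∀ p : P, πP p ∈ U α → p = δP (s α (πP p)) (γ α p))
    (hγsmooth : ∀ α, ContMDiffOn IP IG (⊤ : ℕ∞) (γ α) (πP ⁻¹' U α))
    (κ : ι → Q → H)
    (hκ : ∀ α, ∀ q : Q, πQ q ∈ U α → q = δQ (t α (πQ q)) (κ α q))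
    (hκsmooth : ∀ α, ContMDiffOn IQ IH (⊤ : ℕ∞) (κ α) (πQ ⁻¹' U α))
    (hα : ι → B → H) (hαsmooth : ∀ α, ContMDiffOn IB IH (⊤ : ℕ∞) (hα α) (U α))
    (hαdef : ∀ α, ∀ x ∈ U α, f (s α x) = δQ (t α x) (hα α x))
    -- relatedness: f*θ = φ̄ω
    (hrel : ∀ (p : P) (u : EP),
      θ (f p) (tDiff IP IQ f p u) = lieMorphDiff IG IH φ (ω p u)) :
    ∀ α, ∀ x ∈ U α, ∀ v : TangentSpace IB x,
      lieMorphDiff IG IH φ (ω (s α x) (tDiff IB IP (s α) x v)) =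
        adjRep IH (hα α x)⁻¹ (θ (t α x) (tDiff IB IQ (t α) x v)) +
          leftLog IB IH (hα α) x v :=
  related_implies_local_condition_general IG IH IB IP IQ δQ hδQ hδQmul f φ hf ω θ hθ1 hθ2 U hUopen s
    hssmooth t htsmooth hα hαsmooth hαdef hrel
end
end

section
/- Let (f, φ, id_B) : (P, G, B, π) → (Q, H, B, π′) be a principal bundle morphism, ω and θ connection forms on P and Q, with local connection forms {ω_α}, {θ_α} over a common trivializing cover {U_α}, and h_α : U_α → H defined by f ∘ s_α = t_α·h_α. If φ̄ω_α = Ad(h_α⁻¹).θ_α + h_α⁻¹dh_α holds on U_α for every α, then ω and θ are (f, φ, id_B)-related: f*θ = φ̄ω. -/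
/-!
Fix `p` and `α` with `π(p) ∈ U_α`. Near `p`, `P` is trivialised as `p' = s_α(π p')·γ_α(p')`;
since `f` is equivariant and `f ∘ s_α = t_α·h_α`, near `p` also
`f(p') = t_α(π p')·(h_α(π p')·φ(γ_α p'))`.
Along any map of the form `r ↦ c(r)·k(r)` a connection form equals `Ad(k⁻¹)` of its value
along `c` plus `k⁻¹dk`: the first summand by equivariance, the second because the `k`-derivative
of the action is a fundamental vector field. This recovers `ω` at `p` and `θ` at `f(p)`.
The logarithmic derivative of the product `(h_α ∘ π)·(φ ∘ γ_α)` splits as a gauge transformation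
by `φ ∘ γ_α` of `h_α⁻¹dh_α`, and `φ̄` intertwines `Ad` and carries `γ⁻¹dγ` to
`(φ∘γ)⁻¹d(φ∘γ)`; so the local condition turns one expression into the other.
-/
open scoped Manifold
noncomputable section

/-! Basic vocabulary: left/right logarithmic differentials, adjoint representation,
fundamental vector fields of a right action. All tangent spaces of a manifold modelled
on a normed space `E` (boundaryless, with model `ModelWithCorners ℝ E E`) are `E`. -/

variable {EG : Type*} [NormedAddCommGroup EG] [NormedSpace ℝ EG]
  {G : Type*} [TopologicalSpace G] [ChartedSpace EG G] [Group G]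
  {EM : Type*} [NormedAddCommGroup EM] [NormedSpace ℝ EM]
  {M : Type*} [TopologicalSpace M] [ChartedSpace EM M]

variable {EB : Type*} [NormedAddCommGroup EB] [NormedSpace ℝ EB]
  {B : Type*} [TopologicalSpace B] [ChartedSpace EB B]
  {EP : Type*} [NormedAddCommGroup EP] [NormedSpace ℝ EP]
  {P : Type*} [TopologicalSpace P] [ChartedSpace EP P]

variable {EH : Type*} [NormedAddCommGroup EH] [NormedSpace ℝ EH]
  {H : Type*} [TopologicalSpace H] [ChartedSpace EH H] [Group H]
  {EQ : Type*} [NormedAddCommGroup EQ] [NormedSpace ℝ EQ]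
  {Q : Type*} [TopologicalSpace Q] [ChartedSpace EQ Q]

open Filter Topology

theorem mfderiv_comp₂_apply {E₁ E₂ E₃ : Type*} [NormedAddCommGroup E₁] [NormedSpace ℝ E₁]
    [NormedAddCommGroup E₂] [NormedSpace ℝ E₂] [NormedAddCommGroup E₃] [NormedSpace ℝ E₃]
    {M₁ M₂ M₃ : Type*} [TopologicalSpace M₁] [ChartedSpace E₁ M₁]
    [TopologicalSpace M₂] [ChartedSpace E₂ M₂] [TopologicalSpace M₃] [ChartedSpace E₃ M₃]
    {I₁ : ModelWithCorners ℝ E₁ E₁} {I₂ : ModelWithCorners ℝ E₂ E₂}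
    {I₃ : ModelWithCorners ℝ E₃ E₃} {IM : ModelWithCorners ℝ EM EM}
    (F : M₂ → M₃ → M₁) {c : M → M₂} {k : M → M₃} {x : M}
    (hF : MDifferentiableAt (I₂.prod I₃) I₁ (fun z : M₂ × M₃ => F z.1 z.2) (c x, k x))
    (hc : MDifferentiableAt IM I₂ c x) (hk : MDifferentiableAt IM I₃ k x) (v : EM) :
    mfderiv IM I₁ (fun r => F (c r) (k r)) x v =
      mfderiv I₂ I₁ (fun z => F z (k x)) (c x) (mfderiv IM I₂ c x v) +
        mfderiv I₃ I₁ (F (c x)) (k x) (mfderiv IM I₃ k x v) := by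
  change mfderiv IM I₁ ((fun z : M₂ × M₃ => F z.1 z.2) ∘ fun r => (c r, k r)) x v = _
  rw [mfderiv_comp x hF (hc.prodMk hk), hc.mfderiv_prod hk, mfderiv_prod_eq_add_comp hF]
  rfl

theorem adjRep_add (IG : ModelWithCorners ℝ EG EG) (a : G) (X Y : EG) :
    adjRep IG a (X + Y) = adjRep IG a X + adjRep IG a Y :=
  map_add _ X Y

theorem lieMorphDiff_add (IG : ModelWithCorners ℝ EG EG) (IH : ModelWithCorners ℝ EH EH)
    (φ : G →* H) (X Y : EG) :
    lieMorphDiff IG IH φ (X + Y) = lieMorphDiff IG IH φ X + lieMorphDiff IG IH φ Y :=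
  map_add _ X Y

theorem leftLog_comp {IM : ModelWithCorners ℝ EM EM} {IB : ModelWithCorners ℝ EB EB}
    {IG : ModelWithCorners ℝ EG EG} {π : M → B} {g : B → G} {x : M}
    (hπ : MDifferentiableAt IM IB π x) (hg : MDifferentiableAt IB IG g (π x)) (v : EM) :
    leftLog IM IG (fun r => g (π r)) x v = leftLog IB IG g (π x) (mfderiv IM IB π x v) := by
  unfold leftLog
  rw [show (fun r => g (π r)) = g ∘ π from rfl, mfderiv_comp_apply x hg hπ v]
  rfl

section LieGroup

variable {IG : ModelWithCorners ℝ EG EG} {IH : ModelWithCorners ℝ EH EH}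
  {IM : ModelWithCorners ℝ EM EM} [ContMDiffMul IG 1 G] [ContMDiffMul IH 1 H]

theorem mdifferentiableAt_conj (a y : G) : MDifferentiableAt IG IG (fun g => a * g * a⁻¹) y :=
  mdifferentiableAt_mul_right.comp y (mdifferentiableAt_mul_left (a := a))

theorem adjRep_mul_apply (a b : G) (X : EG) :
    adjRep IG a (adjRep IG b X) = adjRep IG (a * b) X := by
  unfold adjRep
  rw [← mfderiv_comp_apply_of_eq 1 (mdifferentiableAt_conj a 1) (mdifferentiableAt_conj b 1)
    (by group) X]
  congr 2
  funext g
  simp only [Function.comp_apply, mul_inv_rev, mul_assoc]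

theorem leftLog_mul {A B : M → G} {x : M}
    (hA : MDifferentiableAt IM IG A x) (hB : MDifferentiableAt IM IG B x) (v : EM) :
    leftLog IM IG (fun r => A r * B r) x v =
      adjRep IG (B x)⁻¹ (leftLog IM IG A x v) + leftLog IM IG B x v := by
  have hA' : mfderiv IG IG (fun g => (A x * B x)⁻¹ * g) (A x * B x)
      (mfderiv IG IG (· * B x) (A x) (mfderiv IM IG A x v)) =
        adjRep IG (B x)⁻¹ (leftLog IM IG A x v) := by
    unfold adjRep leftLog
    rw [← mfderiv_comp_apply_of_eq (A x) mdifferentiableAt_mul_left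
        mdifferentiableAt_mul_right rfl,
      ← mfderiv_comp_apply_of_eq (A x) (mdifferentiableAt_conj _ 1) mdifferentiableAt_mul_left
        (inv_mul_cancel (A x))]
    congr 2
    funext g
    simp only [Function.comp_apply, mul_inv_rev, inv_inv, mul_assoc]
  have hB' : mfderiv IG IG (fun g => (A x * B x)⁻¹ * g) (A x * B x)
      (mfderiv IG IG (A x * ·) (B x) (mfderiv IM IG B x v)) = leftLog IM IG B x v := by
    unfold leftLog
    rw [← mfderiv_comp_apply_of_eq (B x) mdifferentiableAt_mul_left
      mdifferentiableAt_mul_left rfl]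
    congr 2
    funext g
    simp only [Function.comp_apply, mul_inv_rev, mul_assoc, inv_mul_cancel_left]
  have hsum : leftLog IM IG (fun r => A r * B r) x v =
      mfderiv IG IG (fun g => (A x * B x)⁻¹ * g) (A x * B x)
          (mfderiv IG IG (· * B x) (A x) (mfderiv IM IG A x v)) +
        mfderiv IG IG (fun g => (A x * B x)⁻¹ * g) (A x * B x)
          (mfderiv IG IG (A x * ·) (B x) (mfderiv IM IG B x v)) := by
    unfold leftLog
    rw [mfderiv_comp₂_apply (· * ·) ((contMDiff_mul IG 1).mdifferentiableAt one_ne_zero) hA hB]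
    exact map_add _ _ _
  rw [hsum, hA', hB']
  rfl

/-- Gauge transformations compose: transforming by `A` and then by `B` is transforming by
`A * B`. -/
theorem adjRep_inv_add_leftLog_mul {A B : M → G} {x : M}
    (hA : MDifferentiableAt IM IG A x) (hB : MDifferentiableAt IM IG B x) (Y : EG) (v : EM) :
    adjRep IG (A x * B x)⁻¹ Y + leftLog IM IG (fun r => A r * B r) x v =
      adjRep IG (B x)⁻¹ (adjRep IG (A x)⁻¹ Y + leftLog IM IG A x v) + leftLog IM IG B x v := by
  rw [leftLog_mul hA hB, adjRep_add, adjRep_mul_apply, mul_inv_rev, add_assoc]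

theorem lieMorphDiff_adjRep (φ : G →* H) (hφ : MDifferentiableAt IG IH φ 1) (a : G) (X : EG) :
    lieMorphDiff IG IH φ (adjRep IG a X) = adjRep IH (φ a) (lieMorphDiff IG IH φ X) := by
  unfold lieMorphDiff adjRep
  rw [← mfderiv_comp_apply_of_eq 1 hφ (mdifferentiableAt_conj a 1) (by group) X,
    ← mfderiv_comp_apply_of_eq 1 (mdifferentiableAt_conj (φ a) 1) hφ (map_one φ) X]
  congr 2
  funext g
  simp only [Function.comp_apply, map_mul, map_inv]

theorem lieMorphDiff_leftLog (φ : G →* H) (hφ : MDifferentiable IG IH φ) {k : M → G} {x : M}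
    (hk : MDifferentiableAt IM IG k x) (v : EM) :
    lieMorphDiff IG IH φ (leftLog IM IG k x v) = leftLog IM IH (fun r => φ (k r)) x v := by
  unfold lieMorphDiff leftLog
  have hφk : mfderiv IM IH (fun r => φ (k r)) x v =
      mfderiv IG IH φ (k x) (mfderiv IM IG k x v) :=
    mfderiv_comp_apply x (hφ (k x)) hk v
  have hφ_mul_left : (φ ∘ ((k x)⁻¹ * ·)) = ((φ (k x))⁻¹ * ·) ∘ φ := by
    funext g
    simp only [Function.comp_apply, map_mul, map_inv]
  rw [← mfderiv_comp_apply_of_eq (k x) (hφ 1) mdifferentiableAt_mul_left (inv_mul_cancel _),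
    hφ_mul_left, mfderiv_comp_apply (k x) mdifferentiableAt_mul_left (hφ (k x)), hφk]

theorem lieMorphDiff_adjRep_inv_add_leftLog (φ : G →* H) (hφ : MDifferentiable IG IH φ)
    {k : M → G} {x : M} (hk : MDifferentiableAt IM IG k x) (X : EG) (v : EM) :
    lieMorphDiff IG IH φ (adjRep IG (k x)⁻¹ X + leftLog IM IG k x v) =
      adjRep IH (φ (k x))⁻¹ (lieMorphDiff IG IH φ X) + leftLog IM IH (fun r => φ (k r)) x v := by
  rw [lieMorphDiff_add, lieMorphDiff_adjRep φ (hφ 1), lieMorphDiff_leftLog φ hφ hk, map_inv]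

end LieGroup

section ConnectionForm

variable {IG : ModelWithCorners ℝ EG EG} {IP : ModelWithCorners ℝ EP EP}
  {IM : ModelWithCorners ℝ EM EM}

structure IsConnectionForm (IG : ModelWithCorners ℝ EG EG) (IP : ModelWithCorners ℝ EP EP)
    (δ : P → G → P) (ω : P → EP →L[ℝ] EG) : Prop where
  apply_fundVF : ∀ (p : P) (X : EG), ω p (fundVF IG IP δ X p) = X
  apply_tDiff_act : ∀ (a : G) (p : P) (u : EP),
    ω (δ p a) (tDiff IP IP (fun r => δ r a) p u) = adjRep IG a⁻¹ (ω p u)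

theorem IsConnectionForm.apply_mfderiv_of_eventuallyEq [ContMDiffMul IG 1 G]
    {δ : P → G → P} {ω : P → EP →L[ℝ] EG} (hω : IsConnectionForm IG IP δ ω)
    (hδ : MDifferentiable (IP.prod IG) IP (fun z : P × G => δ z.1 z.2))
    (hδmul : ∀ (p : P) (a b : G), δ (δ p a) b = δ p (a * b))
    {g c : M → P} {k : M → G} {x : M} (hg : g =ᶠ[𝓝 x] fun r => δ (c r) (k r))
    (hc : MDifferentiableAt IM IP c x) (hk : MDifferentiableAt IM IG k x) (u : EM) :
    ω (g x) (mfderiv IM IP g x u) =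
      adjRep IG (k x)⁻¹ (ω (c x) (mfderiv IM IP c x u)) + leftLog IM IG k x u := by
  set q := δ (c x) (k x)
  have horbit : δ (c x) = δ q ∘ ((k x)⁻¹ * ·) := by
    funext a
    simp only [q, Function.comp_apply, hδmul, mul_inv_cancel_left]
  have hq : MDifferentiableAt IG IP (δ q) 1 :=
    (hδ (q, 1)).comp (I := IG) 1 (mdifferentiableAt_const.prodMk mdifferentiableAt_id)
  -- the `k`-derivative of the action is vertical: the fundamental field of `k⁻¹dk`
  have hvert : mfderiv IG IP (δ (c x)) (k x) (mfderiv IM IG k x u) =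
      fundVF IG IP δ (leftLog IM IG k x u) q := by
    rw [horbit, mfderiv_comp_apply_of_eq (k x) hq mdifferentiableAt_mul_left (inv_mul_cancel _)]
    rfl
  rw [hg.eq_of_nhds, hg.mfderiv_eq, mfderiv_comp₂_apply δ (hδ _) hc hk, hvert]
  exact (map_add (ω q) _ _).trans
    (congrArg₂ (· + ·) (hω.apply_tDiff_act (k x) (c x) _) (hω.apply_fundVF q _))

theorem IsConnectionForm.apply_mfderiv_of_eventuallyEq_comp [ContMDiffMul IG 1 G]
    {IB : ModelWithCorners ℝ EB EB} {δ : P → G → P} {ω : P → EP →L[ℝ] EG}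
    (hω : IsConnectionForm IG IP δ ω)
    (hδ : MDifferentiable (IP.prod IG) IP (fun z : P × G => δ z.1 z.2))
    (hδmul : ∀ (p : P) (a b : G), δ (δ p a) b = δ p (a * b))
    {g : M → P} {π : M → B} {σ : B → P} {k : M → G} {x : M}
    (hg : g =ᶠ[𝓝 x] fun r => δ (σ (π r)) (k r)) (hπ : MDifferentiableAt IM IB π x)
    (hσ : MDifferentiableAt IB IP σ (π x)) (hk : MDifferentiableAt IM IG k x) (u : EM) :
    ω (g x) (mfderiv IM IP g x u) =
      adjRep IG (k x)⁻¹ (ω (σ (π x)) (tDiff IB IP σ (π x) (mfderiv IM IB π x u))) +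
        leftLog IM IG k x u := by
  rw [hω.apply_mfderiv_of_eventuallyEq hδ hδmul (c := σ ∘ π) hg (hσ.comp x hπ) hk,
    mfderiv_comp_apply x hσ hπ u]
  rfl

end ConnectionForm

theorem local_condition_implies_related_general {ι : Type*}
    (IG : ModelWithCorners ℝ EG EG) (IH : ModelWithCorners ℝ EH EH)
    (IB : ModelWithCorners ℝ EB EB)
    (IP : ModelWithCorners ℝ EP EP) (IQ : ModelWithCorners ℝ EQ EQ)
    [LieGroup IG (⊤ : ℕ∞) G] [LieGroup IH (⊤ : ℕ∞) H]
    -- smooth free actions on P and Q, fiberwise transitive over the projections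
    (δP : P → G → P) (δQ : Q → H → Q)
    (hδP : ContMDiff (IP.prod IG) IP (⊤ : ℕ∞) (fun z : P × G => δP z.1 z.2))
    (hδQ : ContMDiff (IQ.prod IH) IQ (⊤ : ℕ∞) (fun z : Q × H => δQ z.1 z.2))
    (hδPmul : ∀ (p : P) (a b : G), δP (δP p a) b = δP p (a * b))
    (hδQmul : ∀ (q : Q) (a b : H), δQ (δQ q a) b = δQ q (a * b))
    (πP : P → B)
    (hπP : ContMDiff IP IB (⊤ : ℕ∞) πP)
    -- the pb-morphism (f, φ, id_B)
    (f : P → Q) (φ : G → H)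
    (hφ : ContMDiff IG IH (⊤ : ℕ∞) φ) (hφmul : ∀ a b : G, φ (a * b) = φ a * φ b)
    (hequiv : ∀ (p : P) (a : G), f (δP p a) = δQ (f p) (φ a))
    -- connection forms ω on P and θ on Q
    (ω : P → (EP →L[ℝ] EG)) (θ : Q → (EQ →L[ℝ] EH))
    (hω1 : ∀ (p : P) (X : EG), ω p (fundVF IG IP δP X p) = X)
    (hω2 : ∀ (a : G) (p : P) (u : EP),
      ω (δP p a) (tDiff IP IP (fun r => δP r a) p u) = adjRep IG a⁻¹ (ω p u))
    (hθ1 : ∀ (q : Q) (X : EH), θ q (fundVF IH IQ δQ X q) = X)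
    (hθ2 : ∀ (a : H) (q : Q) (u : EQ),
      θ (δQ q a) (tDiff IQ IQ (fun r => δQ r a) q u) = adjRep IH a⁻¹ (θ q u))
    -- trivializing data over a common open cover of B
    (U : ι → Set B) (hUopen : ∀ α, IsOpen (U α)) (hUcover : ⋃ α, U α = Set.univ)
    (s : ι → B → P) (hssmooth : ∀ α, ContMDiffOn IB IP (⊤ : ℕ∞) (s α) (U α))
    (t : ι → B → Q) (htsmooth : ∀ α, ContMDiffOn IB IQ (⊤ : ℕ∞) (t α) (U α))
    (γ : ι → P → G)
    (hγ : ∀ α, ∀ p : P, πP p ∈ U α → p = δP (s α (πP p)) (γ α p))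
    (hγsmooth : ∀ α, ContMDiffOn IP IG (⊤ : ℕ∞) (γ α) (πP ⁻¹' U α))
    (hα : ι → B → H) (hαsmooth : ∀ α, ContMDiffOn IB IH (⊤ : ℕ∞) (hα α) (U α))
    (hαdef : ∀ α, ∀ x ∈ U α, f (s α x) = δQ (t α x) (hα α x))
    -- the local condition
    (hloc : ∀ α, ∀ x ∈ U α, ∀ v : TangentSpace IB x,
      lieMorphDiff IG IH φ (ω (s α x) (tDiff IB IP (s α) x v)) =
        adjRep IH (hα α x)⁻¹ (θ (t α x) (tDiff IB IQ (t α) x v)) +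
          leftLog IB IH (hα α) x v) :
    ∀ (p : P) (u : EP),
      θ (f p) (tDiff IP IQ f p u) = lieMorphDiff IG IH φ (ω p u) := by
  intro p u
  obtain ⟨α, hpα⟩ : ∃ α, πP p ∈ U α := Set.mem_iUnion.mp (hUcover ▸ Set.mem_univ _)
  set x : B := πP p
  set v : EB := mfderiv IP IB πP p u
  let φ' : G →* H := MonoidHom.mk' φ hφmul
  have hUα : U α ∈ 𝓝 x := (hUopen α).mem_nhds hpα
  have hπα : πP ⁻¹' U α ∈ 𝓝 p := hπP.continuous.continuousAt.preimage_mem_nhds hUα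
  have hπ : MDifferentiableAt IP IB πP p := hπP.mdifferentiableAt (by simp)
  have hs := ((hssmooth α).mdifferentiableOn (by simp)).mdifferentiableAt hUα
  have ht := ((htsmooth α).mdifferentiableOn (by simp)).mdifferentiableAt hUα
  have hh := ((hαsmooth α).mdifferentiableOn (by simp)).mdifferentiableAt hUα
  have hγp := ((hγsmooth α).mdifferentiableOn (by simp)).mdifferentiableAt hπα
  have hφ' : MDifferentiable IG IH φ' := hφ.mdifferentiable (by simp)
  have hf : f =ᶠ[𝓝 p] fun r => δQ (t α (πP r)) (hα α (πP r) * φ (γ α r)) :=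
    eventually_of_mem hπα fun r hr => by
      dsimp only
      rw [← hδQmul, ← hαdef α _ hr, ← hequiv, ← hγ α r hr]
  have hωp := (IsConnectionForm.mk hω1 hω2).apply_mfderiv_of_eventuallyEq_comp
    (hδP.mdifferentiable (by simp)) hδPmul (g := id)
    (eventually_of_mem hπα fun r hr => hγ α r hr) hπ hs hγp u
  have hθfp := (IsConnectionForm.mk hθ1 hθ2).apply_mfderiv_of_eventuallyEq_comp
    (hδQ.mdifferentiable (by simp)) hδQmul hf hπ ht
    (((contMDiff_mul IH 1).mdifferentiableAt one_ne_zero).comp p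
      ((hh.comp p hπ).prodMk ((hφ' _).comp p hγp))) u
  rw [mfderiv_id] at hωp
  calc θ (f p) (tDiff IP IQ f p u)
    _ = adjRep IH (φ (γ α p))⁻¹
          (adjRep IH (hα α x)⁻¹ (θ (t α x) (tDiff IB IQ (t α) x v)) + leftLog IB IH (hα α) x v) +
        leftLog IP IH (fun r => φ (γ α r)) p u := by
      rw [tDiff, hθfp, adjRep_inv_add_leftLog_mul (A := fun r => hα α (πP r))
        (B := fun r => φ (γ α r)) (hh.comp p hπ) ((hφ' _).comp p hγp), leftLog_comp hπ hh]
    _ = adjRep IH (φ (γ α p))⁻¹ (lieMorphDiff IG IH φ (ω (s α x) (tDiff IB IP (s α) x v))) +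
        leftLog IP IH (fun r => φ (γ α r)) p u := by
      rw [hloc α x hpα v]
    _ = lieMorphDiff IG IH φ (ω p u) := by
      rw [show ω p u = _ from hωp]
      exact (lieMorphDiff_adjRep_inv_add_leftLog φ' hφ' hγp _ _).symm

/-- Theorem 4.1, converse part: if `φ̄ω_α = Ad(h_α⁻¹).θ_α + h_α⁻¹dh_α` on each `U_α`,
then `ω` and `θ` are `(f, φ, id_B)`-related: `f*θ = φ̄ω`. -/
theorem local_condition_implies_related {ι : Type*}
    (IG : ModelWithCorners ℝ EG EG) (IH : ModelWithCorners ℝ EH EH)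
    (IB : ModelWithCorners ℝ EB EB)
    (IP : ModelWithCorners ℝ EP EP) (IQ : ModelWithCorners ℝ EQ EQ)
    [LieGroup IG (⊤ : ℕ∞) G] [LieGroup IH (⊤ : ℕ∞) H] [IsManifold IB (⊤ : ℕ∞) B]
    [IsManifold IP (⊤ : ℕ∞) P] [IsManifold IQ (⊤ : ℕ∞) Q]
    -- smooth free actions on P and Q, fiberwise transitive over the projections
    (δP : P → G → P) (δQ : Q → H → Q)
    (hδP : ContMDiff (IP.prod IG) IP (⊤ : ℕ∞) (fun z : P × G => δP z.1 z.2))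
    (hδQ : ContMDiff (IQ.prod IH) IQ (⊤ : ℕ∞) (fun z : Q × H => δQ z.1 z.2))
    (hδP1 : ∀ p : P, δP p 1 = p)
    (hδPmul : ∀ (p : P) (a b : G), δP (δP p a) b = δP p (a * b))
    (hδQ1 : ∀ q : Q, δQ q 1 = q)
    (hδQmul : ∀ (q : Q) (a b : H), δQ (δQ q a) b = δQ q (a * b))
    (hδPfree : ∀ (p : P) (a : G), δP p a = p → a = 1)
    (hδQfree : ∀ (q : Q) (a : H), δQ q a = q → a = 1)
    (πP : P → B) (πQ : Q → B)
    (hπP : ContMDiff IP IB (⊤ : ℕ∞) πP) (hπQ : ContMDiff IQ IB (⊤ : ℕ∞) πQ)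
    (hπPδ : ∀ (p : P) (a : G), πP (δP p a) = πP p)
    (hπQδ : ∀ (q : Q) (a : H), πQ (δQ q a) = πQ q)
    -- the pb-morphism (f, φ, id_B)
    (f : P → Q) (φ : G → H) (hf : ContMDiff IP IQ (⊤ : ℕ∞) f)
    (hφ : ContMDiff IG IH (⊤ : ℕ∞) φ) (hφmul : ∀ a b : G, φ (a * b) = φ a * φ b)
    (hπf : ∀ p : P, πQ (f p) = πP p)
    (hequiv : ∀ (p : P) (a : G), f (δP p a) = δQ (f p) (φ a))
    -- connection forms ω on P and θ on Q
    (ω : P → (EP →L[ℝ] EG)) (θ : Q → (EQ →L[ℝ] EH))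
    (hω1 : ∀ (p : P) (X : EG), ω p (fundVF IG IP δP X p) = X)
    (hω2 : ∀ (a : G) (p : P) (u : EP),
      ω (δP p a) (tDiff IP IP (fun r => δP r a) p u) = adjRep IG a⁻¹ (ω p u))
    (hθ1 : ∀ (q : Q) (X : EH), θ q (fundVF IH IQ δQ X q) = X)
    (hθ2 : ∀ (a : H) (q : Q) (u : EQ),
      θ (δQ q a) (tDiff IQ IQ (fun r => δQ r a) q u) = adjRep IH a⁻¹ (θ q u))
    -- trivializing data over a common open cover of B
    (U : ι → Set B) (hUopen : ∀ α, IsOpen (U α)) (hUcover : ⋃ α, U α = Set.univ)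
    (s : ι → B → P) (hssmooth : ∀ α, ContMDiffOn IB IP (⊤ : ℕ∞) (s α) (U α))
    (hsecP : ∀ α, ∀ x ∈ U α, πP (s α x) = x)
    (t : ι → B → Q) (htsmooth : ∀ α, ContMDiffOn IB IQ (⊤ : ℕ∞) (t α) (U α))
    (hsecQ : ∀ α, ∀ x ∈ U α, πQ (t α x) = x)
    (γ : ι → P → G)
    (hγ : ∀ α, ∀ p : P, πP p ∈ U α → p = δP (s α (πP p)) (γ α p))
    (hγsmooth : ∀ α, ContMDiffOn IP IG (⊤ : ℕ∞) (γ α) (πP ⁻¹' U α))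
    (κ : ι → Q → H)
    (hκ : ∀ α, ∀ q : Q, πQ q ∈ U α → q = δQ (t α (πQ q)) (κ α q))
    (hκsmooth : ∀ α, ContMDiffOn IQ IH (⊤ : ℕ∞) (κ α) (πQ ⁻¹' U α))
    (hα : ι → B → H) (hαsmooth : ∀ α, ContMDiffOn IB IH (⊤ : ℕ∞) (hα α) (U α))
    (hαdef : ∀ α, ∀ x ∈ U α, f (s α x) = δQ (t α x) (hα α x))
    -- the local condition
    (hloc : ∀ α, ∀ x ∈ U α, ∀ v : TangentSpace IB x,
      lieMorphDiff IG IH φ (ω (s α x) (tDiff IB IP (s α) x v)) =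
        adjRep IH (hα α x)⁻¹ (θ (t α x) (tDiff IB IQ (t α) x v)) +
          leftLog IB IH (hα α) x v) :
    ∀ (p : P) (u : EP),
      θ (f p) (tDiff IP IQ f p u) = lieMorphDiff IG IH φ (ω p u) :=
  local_condition_implies_related_general IG IH IB IP IQ δP δQ hδP hδQ hδPmul hδQmul πP hπP f φ hφ
    hφmul hequiv ω θ hω1 hω2 hθ1 hθ2 U hUopen hUcover s hssmooth t htsmooth γ hγ hγsmooth hα
    hαsmooth hαdef hloc
end
end
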